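/- Let M be a 3-connected matroid with a spider-like 3-separator P = Q_1 ∪ Q_2, where Q_1 = {p_1,p_2,p_3,p_4} and Q_2 = {q_1,q_2,q_3,q_4} are disjoint quads, P is a rank-5, corank-5, exactly 3-separating set, the circuits of M contained in P are {p_1,p_2,q_1,q_2}, {p_1,p_2,q_3,q_4}, {p_3,p_4,q_1,q_2}, {p_3,p_4,q_3,q_4}, and the cocircuits of M contained in P are {p_1,p_3,q_1,q_3}, {p_1,p_3,q_2,q_4}, {p_2,p_4,q_1,q_3}, {p_2,p_4,q_2,q_4}. Then for every p ∈ P, both si(M/p) and co(M\p) are 3-connected. -/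

import Mathlib

open Set Matroid

namespace NDP

variable {α : Type*}

/-- The rank of a set in a matroid: the supremum of sizes of independent subsets. -/
noncomputable def rk (M : Matroid α) (X : Set α) : ℕ :=
  sSup {n | ∃ I, M.Indep I ∧ I ⊆ X ∧ I.ncard = n}

/-- A circuit: a minimal dependent subset of the ground set. -/
def Circuit (M : Matroid α) (C : Set α) : Prop :=
  C ⊆ M.E ∧ ¬ M.Indep C ∧ ∀ x ∈ C, M.Indep (C \ {x})

/-- A cocircuit: a circuit of the dual matroid. -/
def Cocircuit (M : Matroid α) (C : Set α) : Prop := Circuit M✶ C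

/-- Deletion of a set of elements. -/
def delete (M : Matroid α) (D : Set α) : Matroid α := M ↾ (M.E \ D)

/-- Contraction of a set of elements. -/
def contract (M : Matroid α) (C : Set α) : Matroid α := (delete M✶ C)✶

/-- The connectivity function `λ_M(X) = r(X) + r(E − X) − r(M)`. -/
noncomputable def lambda (M : Matroid α) (X : Set α) : ℤ :=
  (rk M X : ℤ) + (rk M (M.E \ X) : ℤ) - (rk M M.E : ℤ)

/-- `S` gives a `k`-separation `(S, E − S)` of `M`. -/
def IsKSeparation (M : Matroid α) (k : ℕ) (S : Set α) : Prop :=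
  S ⊆ M.E ∧ lambda M S ≤ (k : ℤ) - 1 ∧ k ≤ S.ncard ∧ k ≤ (M.E \ S).ncard

/-- A matroid is connected (2-connected) if it has no 1-separation. -/
def Connected (M : Matroid α) : Prop := ∀ S, ¬ IsKSeparation M 1 S

/-- A matroid is 3-connected if it has no `k`-separation for `k < 3`. -/
def ThreeConnected (M : Matroid α) : Prop := ∀ k < 3, ∀ S, ¬ IsKSeparation M k S

/-- Isomorphism of two matroids on the same type. -/
def Iso (M N : Matroid α) : Prop :=
  ∃ e : M.E ≃ N.E,
    ∀ I : Set M.E, M.Indep (Subtype.val '' I) ↔ N.Indep (Subtype.val '' (e '' I))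

/-- `N` is a minor of `M`. -/
def IsMinor (N M : Matroid α) : Prop :=
  ∃ C D : Set α, C ⊆ M.E ∧ D ⊆ M.E ∧ Disjoint C D ∧ N = delete (contract M C) D

/-- `M` has a minor isomorphic to `N`. -/
def HasMinorIso (M N : Matroid α) : Prop := ∃ M', IsMinor M' M ∧ Iso M' N

/-- `N` is a simplification of `M`: the restriction of `M` to a set of representatives,
one from each parallel class of nonloop elements. -/
def IsSimplification (M N : Matroid α) : Prop :=
  ∃ X ⊆ M.E, N = M ↾ X ∧
    (∀ e ∈ X, M.Indep {e}) ∧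
    (∀ e f, e ∈ X → f ∈ X → e ∈ M.closure {f} → e = f) ∧
    (∀ e ∈ M.E, M.Indep {e} → ∃ f ∈ X, e ∈ M.closure {f})

/-- `si M` is 3-connected. -/
def SiThreeConnected (M : Matroid α) : Prop :=
  ∀ N, IsSimplification M N → ThreeConnected N

/-- `co M` is 3-connected; the cosimplification is the dual of the simplification of the dual. -/
def CoThreeConnected (M : Matroid α) : Prop :=
  ∀ N, IsSimplification M✶ N → ThreeConnected N✶

variable {M : Matroid α} {X Y Z I J S A B C Q : Set α} {e f p c : α}

lemma dualFinite (M : Matroid α) [M.Finite] : M✶.Finite :=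
  ⟨by rw [dual_ground]; exact M.ground_finite⟩

lemma rk_set_nonempty (M : Matroid α) (X : Set α) :
    {n | ∃ I, M.Indep I ∧ I ⊆ X ∧ I.ncard = n}.Nonempty :=
  ⟨0, ∅, M.empty_indep, empty_subset _, by simp⟩

lemma rk_set_bddAbove [M.Finite] (X : Set α) :
    BddAbove {n | ∃ I, M.Indep I ∧ I ⊆ X ∧ I.ncard = n} := by
  refine ⟨M.E.ncard, ?_⟩
  rintro n ⟨I, hI, -, rfl⟩
  exact ncard_le_ncard hI.subset_ground M.ground_finite

lemma le_rk [M.Finite] (hI : M.Indep I) (hIX : I ⊆ X) : I.ncard ≤ rk M X :=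
  le_csSup (rk_set_bddAbove X) ⟨I, hI, hIX, rfl⟩

lemma exists_rk (M : Matroid α) [M.Finite] (X : Set α) :
    ∃ I, M.Indep I ∧ I ⊆ X ∧ I.ncard = rk M X :=
  Nat.sSup_mem (rk_set_nonempty M X) (rk_set_bddAbove X)

lemma rk_mono [M.Finite] (hXY : X ⊆ Y) : rk M X ≤ rk M Y := by
  obtain ⟨I, hI, hIX, hcard⟩ := exists_rk M X
  rw [← hcard]
  exact le_rk hI (hIX.trans hXY)

lemma rk_le_ncard [M.Finite] (hX : X.Finite) : rk M X ≤ X.ncard := by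
  obtain ⟨I, hI, hIX, hcard⟩ := exists_rk M X
  rw [← hcard]
  exact ncard_le_ncard hIX hX

lemma rk_empty (M : Matroid α) [M.Finite] : rk M ∅ = 0 :=
  Nat.le_zero.1 ((rk_le_ncard finite_empty).trans (by simp))

lemma rk_insert_le [M.Finite] : rk M (insert e X) ≤ rk M X + 1 := by
  obtain ⟨I, hI, hIX, hcard⟩ := exists_rk M (insert e X)
  have hfin : I.Finite := hI.finite
  have h1 : I.ncard ≤ (I \ {e}).ncard + 1 := by
    have := ncard_le_ncard (subset_insert_diff_singleton e I) (hfin.diff |>.insert e)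
    calc I.ncard ≤ (insert e (I \ {e})).ncard := this
    _ ≤ (I \ {e}).ncard + 1 := ncard_insert_le _ _
  have h2 : (I \ {e}).ncard ≤ rk M X := by
    refine le_rk (hI.subset diff_subset) ?_
    rintro x ⟨hx, hxe⟩
    rcases hIX hx with rfl | h
    · exact absurd rfl hxe
    · exact h
  omega

lemma augment_ncard [M.Finite] (hI : M.Indep I) (hJ : M.Indep J) (h : I.ncard < J.ncard) :
    ∃ e ∈ J \ I, M.Indep (insert e I) := by
  refine hI.augment hJ ?_
  rw [← hI.finite.cast_ncard_eq, ← hJ.finite.cast_ncard_eq]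
  exact_mod_cast h

lemma indep_extend_within [M.Finite] (hI : M.Indep I) (hIX : I ⊆ X)
    (h : I.ncard < rk M X) : ∃ e ∈ X \ I, M.Indep (insert e I) := by
  obtain ⟨J, hJ, hJX, hcard⟩ := exists_rk M X
  obtain ⟨e, heJI, hind⟩ := augment_ncard hI hJ (hcard ▸ h)
  exact ⟨e, ⟨hJX heJI.1, heJI.2⟩, hind⟩

lemma exists_max_superset_aux [M.Finite] (n : ℕ) :
    ∀ I, M.Indep I → I ⊆ X → rk M X ≤ I.ncard + n →
    ∃ B, M.Indep B ∧ I ⊆ B ∧ B ⊆ X ∧ B.ncard = rk M X := by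
  induction n with
  | zero =>
    intro I hI hIX hle
    exact ⟨I, hI, Subset.rfl, hIX, le_antisymm (le_rk hI hIX) (by omega)⟩
  | succ n ih =>
    intro I hI hIX hle
    rcases eq_or_lt_of_le (le_rk hI hIX) with heq | hlt
    · exact ⟨I, hI, Subset.rfl, hIX, heq⟩
    obtain ⟨e, ⟨heX, heI⟩, hind⟩ := indep_extend_within hI hIX hlt
    have hcard : (insert e I).ncard = I.ncard + 1 := ncard_insert_of_notMem heI hI.finite
    obtain ⟨B, h1, h2, h3, h4⟩ := ih (insert e I) hind (insert_subset heX hIX) (by omega)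
    exact ⟨B, h1, (subset_insert e I).trans h2, h3, h4⟩

lemma exists_max_superset [M.Finite] (hI : M.Indep I) (hIX : I ⊆ X) :
    ∃ B, M.Indep B ∧ I ⊆ B ∧ B ⊆ X ∧ B.ncard = rk M X :=
  exists_max_superset_aux (rk M X) I hI hIX (by omega)

lemma spans_insert_mono [M.Finite] (hXY : X ⊆ Y)
    (h : rk M (insert e X) = rk M X) : rk M (insert e Y) = rk M Y := by
  rcases em (e ∈ Y) with heY | heY
  · rw [insert_eq_self.2 heY]
  have heX : e ∉ X := fun hx => heY (hXY hx)
  refine le_antisymm ?_ (rk_mono (subset_insert e Y))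
  by_contra h2
  push_neg at h2
  obtain ⟨J, hJ, hJX, hJcard⟩ := exists_rk M X
  obtain ⟨By, hBy, hJBy, hByY, hBycard⟩ := exists_max_superset hJ (hJX.trans hXY)
  obtain ⟨f, ⟨hfY, hfBy⟩, hfind⟩ := indep_extend_within hBy (hByY.trans (subset_insert e Y))
    (by omega)
  rcases mem_insert_iff.1 hfY with heq | hfY
  · subst heq
    have heJ : f ∉ J := fun hc => heX (hJX hc)
    have h5 : (insert f J).ncard ≤ rk M (insert f X) :=
      le_rk (hfind.subset (insert_subset_insert hJBy)) (insert_subset_insert hJX)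
    rw [ncard_insert_of_notMem heJ hJ.finite, h, hJcard] at h5
    omega
  · have h5 : (insert f By).ncard ≤ rk M Y :=
      le_rk hfind (insert_subset hfY hByY)
    rw [ncard_insert_of_notMem hfBy hBy.finite, hBycard] at h5
    omega

lemma rk_union_eq_self_of_spans [M.Finite]
    (h : ∀ e ∈ Y, rk M (insert e X) = rk M X) : rk M (X ∪ Y) = rk M X := by
  refine le_antisymm ?_ (rk_mono subset_union_left)
  by_contra h2
  push_neg at h2
  obtain ⟨I, hI, hIX, hIcard⟩ := exists_rk M X
  obtain ⟨f, ⟨hfXY, hfI⟩, hfind⟩ := indep_extend_within (X := X ∪ Y) hI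
    (hIX.trans subset_union_left) (by omega)
  have hcard : (insert f I).ncard = rk M X + 1 := by
    rw [ncard_insert_of_notMem hfI hI.finite, hIcard]
  rcases hfXY with hfX | hfY
  · have := le_rk hfind (insert_subset hfX hIX)
    omega
  · have := le_rk hfind (insert_subset (mem_insert f X) (hIX.trans (subset_insert f X)))
    rw [h f hfY] at this
    omega

lemma rk_union_le [M.Finite] (X Y : Set α) : rk M (X ∪ Y) ≤ rk M X + rk M Y := by
  obtain ⟨I, hI, hIXY, hIcard⟩ := exists_rk M (X ∪ Y)
  have h1 : (I ∩ X).ncard + (I \ X).ncard = I.ncard :=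
    ncard_inter_add_ncard_diff_eq_ncard I X hI.finite
  have h2 : (I ∩ X).ncard ≤ rk M X := le_rk (hI.subset inter_subset_left) inter_subset_right
  have h3 : (I \ X).ncard ≤ rk M Y := by
    refine le_rk (hI.subset diff_subset) ?_
    rintro x ⟨hx, hxX⟩
    rcases hIXY hx with h | h
    · exact absurd h hxX
    · exact h
  omega


lemma base_iff_rk [M.Finite] : M.IsBase B ↔ M.Indep B ∧ B.ncard = rk M M.E := by
  constructor
  · intro hB
    refine ⟨hB.indep, le_antisymm (le_rk hB.indep hB.indep.subset_ground) ?_⟩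
    by_contra h
    push_neg at h
    obtain ⟨e, ⟨heE, heB⟩, hind⟩ := indep_extend_within hB.indep hB.indep.subset_ground h
    exact (hB.insert_dep ⟨heE, heB⟩).1 hind
  · rintro ⟨hind, hcard⟩
    refine hind.isBase_of_maximal fun J hJ hBJ => ?_
    refine eq_of_subset_of_ncard_le hBJ ?_ hJ.finite
    rw [hcard]
    exact le_rk hJ hJ.subset_ground

lemma circuit_nonempty (hC : Circuit M C) : C.Nonempty := by
  rcases C.eq_empty_or_nonempty with rfl | h
  · exact absurd M.empty_indep hC.2.1
  · exact h

lemma circuit_rk [M.Finite] (hC : Circuit M C) : rk M C + 1 = C.ncard := by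
  have hCfin : C.Finite := M.set_finite C hC.1
  obtain ⟨x, hx⟩ := circuit_nonempty hC
  have h1 : C.ncard - 1 ≤ rk M C := by
    have := le_rk (hC.2.2 x hx) (diff_subset (t := {x}))
    rwa [ncard_diff_singleton_of_mem hx] at this
  have h2 : rk M C ≤ C.ncard := rk_le_ncard hCfin
  have h3 : rk M C ≠ C.ncard := by
    intro h
    obtain ⟨I, hI, hIC, hIcard⟩ := exists_rk M C
    rw [h] at hIcard
    rw [eq_of_subset_of_ncard_le hIC (by omega) hCfin] at hI
    exact hC.2.1 hI
  have h4 : 1 ≤ C.ncard := by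
    rw [Nat.one_le_iff_ne_zero, ne_eq, ncard_eq_zero hCfin]
    exact fun h => absurd hx (by rw [h]; exact notMem_empty x)
  omega

lemma circuit_rk_diff [M.Finite] (hC : Circuit M C) (hx : c ∈ C) :
    rk M (C \ {c}) = rk M C := by
  have hCfin : C.Finite := M.set_finite C hC.1
  have h1 : C.ncard - 1 ≤ rk M (C \ {c}) := by
    have := le_rk (hC.2.2 c hx) (Subset.rfl : C \ {c} ⊆ C \ {c})
    rwa [ncard_diff_singleton_of_mem hx] at this
  have h2 := rk_mono (M := M) (diff_subset (s := C) (t := {c}))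
  have h3 := circuit_rk hC
  omega

lemma circuit_spans_insert [M.Finite] (hC : Circuit M C) (hx : c ∈ C) :
    rk M (insert c (C \ {c})) = rk M (C \ {c}) := by
  rw [insert_diff_singleton, insert_eq_of_mem hx]
  exact (circuit_rk_diff hC hx).symm

lemma rk_dual [M.Finite] (hZ : Z ⊆ M.E) :
    rk M✶ Z + rk M M.E = Z.ncard + rk M (M.E \ Z) := by
  haveI := dualFinite M
  have hEfin : M.E.Finite := M.ground_finite
  have hZfin : Z.Finite := hEfin.subset hZ
  -- direction ≥
  have hge : Z.ncard + rk M (M.E \ Z) ≤ rk M✶ Z + rk M M.E := by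
    obtain ⟨J, hJ, hJX, hJcard⟩ := exists_rk M (M.E \ Z)
    obtain ⟨B, hBind, hJB, hBE, hBcard⟩ := exists_max_superset hJ (hJX.trans diff_subset)
    have hBase : M.IsBase B := base_iff_rk.2 ⟨hBind, hBcard⟩
    have hIco : M✶.Indep (Z \ B) := by
      rw [dual_indep_iff_exists (diff_subset.trans hZ)]
      exact ⟨B, hBase, disjoint_sdiff_left⟩
    have h1 : (Z \ B).ncard ≤ rk M✶ Z := le_rk hIco diff_subset
    have h2 : (Z ∩ B).ncard + (Z \ B).ncard = Z.ncard :=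
      ncard_inter_add_ncard_diff_eq_ncard Z B hZfin
    have h3 : (B ∩ Z).ncard + (B \ Z).ncard = B.ncard :=
      ncard_inter_add_ncard_diff_eq_ncard B Z (hEfin.subset hBE)
    have h4 : (B \ Z).ncard = rk M (M.E \ Z) := by
      refine le_antisymm (le_rk (hBind.subset diff_subset) ?_) ?_
      · exact diff_subset_diff_left hBE
      · rw [← hJcard]
        refine ncard_le_ncard ?_ (hEfin.subset (hBE.trans Subset.rfl) |>.diff)
        intro x hxJ
        exact ⟨hJB hxJ, (hJX hxJ).2⟩
    have h5 : (Z ∩ B).ncard = (B ∩ Z).ncard := by rw [inter_comm]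
    omega
  -- direction ≤
  have hle : rk M✶ Z + rk M M.E ≤ Z.ncard + rk M (M.E \ Z) := by
    obtain ⟨I, hI, hIZ, hIcard⟩ := exists_rk M✶ Z
    obtain ⟨hIE, B, hBase, hdisj⟩ := dual_indep_iff_exists'.1 hI
    have hBfin : B.Finite := hEfin.subset hBase.subset_ground
    have h1 : (B \ Z).ncard ≤ rk M (M.E \ Z) :=
      le_rk (hBase.indep.subset diff_subset) (diff_subset_diff_left hBase.subset_ground)
    have h2 : (B ∩ Z).ncard + (B \ Z).ncard = B.ncard :=
      ncard_inter_add_ncard_diff_eq_ncard B Z hBfin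
    have h3 : B.ncard = rk M M.E := (base_iff_rk.1 hBase).2
    have h4 : (B ∩ Z).ncard ≤ (Z \ I).ncard := by
      refine ncard_le_ncard ?_ (hZfin.diff)
      rintro x ⟨hxB, hxZ⟩
      exact ⟨hxZ, fun hxI => (hdisj.ne_of_mem hxI hxB) rfl⟩
    have h5 : (Z \ I).ncard + I.ncard = Z.ncard := by
      rw [ncard_diff hIZ (hZfin.subset hIZ)]
      have := ncard_le_ncard hIZ hZfin
      omega
    omega
  omega

lemma rk_restrict [M.Finite] (hSX : S ⊆ X) : rk (M ↾ X) S = rk M S := by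
  unfold rk
  congr 1
  ext n
  constructor
  · rintro ⟨I, hI, hIS, rfl⟩
    exact ⟨I, (restrict_indep_iff.1 hI).1, hIS, rfl⟩
  · rintro ⟨I, hI, hIS, rfl⟩
    exact ⟨I, restrict_indep_iff.2 ⟨hI, hIS.trans hSX⟩, hIS, rfl⟩

lemma contract_ground (M : Matroid α) (p : α) :
    (contract M {p}).E = M.E \ {p} := by
  simp [contract, delete]

lemma contractFinite (M : Matroid α) [M.Finite] (p : α) : (contract M {p}).Finite :=
  ⟨by rw [contract_ground]; exact M.ground_finite.diff⟩

lemma rk_contract_add [M.Finite] (hp : p ∈ M.E) (hZ : Z ⊆ M.E \ {p}) :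
    rk (contract M {p}) Z + rk M {p} = rk M (insert p Z) := by
  haveI := dualFinite M
  have hEfin : M.E.Finite := M.ground_finite
  set N := M✶ ↾ (M✶.E \ {p}) with hN
  haveI : N.Finite := ⟨by rw [hN, restrict_ground_eq]; exact hEfin.diff⟩
  have hNE : N.E = M.E \ {p} := by rw [hN, restrict_ground_eq, dual_ground]
  have hcon : contract M {p} = N✶ := rfl
  have hZE : Z ⊆ M.E := hZ.trans diff_subset
  have hpZ : p ∉ Z := fun h => (hZ h).2 rfl
  -- dual formula for N
  have e1 : rk N✶ Z + rk N N.E = Z.ncard + rk N (N.E \ Z) := rk_dual (by rw [hNE]; exact hZ)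
  have e2 : rk N N.E = rk M✶ (M.E \ {p}) := by
    rw [hNE, hN]
    exact rk_restrict (by rw [dual_ground])
  have e3 : rk N (N.E \ Z) = rk M✶ (M.E \ insert p Z) := by
    have hid : N.E \ Z = M.E \ insert p Z := by
      rw [hNE, diff_diff, ← insert_eq]
    rw [hid, hN]
    refine rk_restrict ?_
    rw [dual_ground]
    intro x hx
    exact ⟨hx.1, fun h => hx.2 (mem_insert_iff.2 (Or.inl h))⟩
  -- dual formulas for M
  have e4 : rk M✶ (M.E \ {p}) + rk M M.E = (M.E \ {p}).ncard + rk M {p} := by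
    have := rk_dual (M := M) (diff_subset (s := M.E) (t := {p}))
    rwa [diff_diff_cancel_left (singleton_subset_iff.2 hp)] at this
  have e5 : rk M✶ (M.E \ insert p Z) + rk M M.E
      = (M.E \ insert p Z).ncard + rk M (insert p Z) := by
    have := rk_dual (M := M) (diff_subset (s := M.E) (t := insert p Z))
    rwa [diff_diff_cancel_left (insert_subset hp hZE)] at this
  -- ncard arithmetic
  have hZfin : Z.Finite := hEfin.subset hZE
  have n1 : (M.E \ {p}).ncard + 1 = M.E.ncard := by
    rw [ncard_diff (singleton_subset_iff.2 hp) (finite_singleton p), ncard_singleton]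
    have : 1 ≤ M.E.ncard := by
      rw [Nat.one_le_iff_ne_zero, ne_eq, ncard_eq_zero hEfin]
      exact fun h => (h ▸ hp : p ∈ (∅ : Set α))
    omega
  have n2 : (M.E \ insert p Z).ncard + (Z.ncard + 1) = M.E.ncard := by
    have hsub : insert p Z ⊆ M.E := insert_subset hp hZE
    rw [ncard_diff hsub (hZfin.insert p), ncard_insert_of_notMem hpZ hZfin]
    have := ncard_le_ncard hsub hEfin
    have : (insert p Z).ncard ≤ M.E.ncard := this
    rw [ncard_insert_of_notMem hpZ hZfin] at this
    omega
  rw [hcon]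
  omega


lemma threeConn_rk_ge [M.Finite] (hM : ThreeConnected M) {k : ℕ} (hk : k < 3) (hS : S ⊆ M.E)
    (h1 : k ≤ S.ncard) (h2 : k ≤ (M.E \ S).ncard) :
    rk M M.E + k ≤ rk M S + rk M (M.E \ S) := by
  by_contra h
  push_neg at h
  refine hM k hk S ⟨hS, ?_, h1, h2⟩
  show (rk M S : ℤ) + (rk M (M.E \ S) : ℤ) - (rk M M.E : ℤ) ≤ (k : ℤ) - 1
  omega

lemma ncard_ground_pos_of_mem [M.Finite] (he : e ∈ M.E) : 1 ≤ M.E.ncard :=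
  (ncard_pos M.ground_finite).2 ⟨e, he⟩

lemma threeConn_singleton [M.Finite] (hM : ThreeConnected M) (hE2 : 2 ≤ M.E.ncard)
    (he : e ∈ M.E) : rk M {e} = 1 ∧ rk M (M.E \ {e}) = rk M M.E := by
  have h1 : rk M {e} ≤ 1 := (rk_le_ncard (finite_singleton e)).trans_eq (ncard_singleton e)
  have h2 : rk M (M.E \ {e}) ≤ rk M M.E := rk_mono diff_subset
  have h3 : 1 ≤ (M.E \ {e}).ncard := by
    rw [ncard_diff (singleton_subset_iff.2 he) (finite_singleton e), ncard_singleton]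
    omega
  have h4 := threeConn_rk_ge hM (by omega : 1 < 3) (singleton_subset_iff.2 he)
    (by rw [ncard_singleton]) h3
  omega

lemma threeConn_pair [M.Finite] (hM : ThreeConnected M) (hE4 : 4 ≤ M.E.ncard)
    (he : e ∈ M.E) (hf : f ∈ M.E) (hef : e ≠ f) : rk M {e, f} = 2 := by
  have hsub : {e, f} ⊆ M.E := insert_subset he (singleton_subset_iff.2 hf)
  have h1 : rk M {e, f} ≤ 2 := by
    have := rk_le_ncard (M := M) (X := {e, f}) ((finite_singleton f).insert e)
    rwa [ncard_pair hef] at this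
  have h2 : rk M (M.E \ {e, f}) ≤ rk M M.E := rk_mono diff_subset
  have h3 : 2 ≤ (M.E \ {e, f}).ncard := by
    rw [ncard_diff hsub ((finite_singleton f).insert e), ncard_pair hef]
    omega
  have h4 := threeConn_rk_ge hM (by omega : 2 < 3) hsub (by rw [ncard_pair hef]) h3
  omega

lemma rk_singleton_indep [M.Finite] (h : rk M {e} = 1) : M.Indep {e} := by
  obtain ⟨I, hI, hIe, hIcard⟩ := exists_rk M {e}
  rw [h] at hIcard
  rwa [eq_of_subset_of_ncard_le hIe (by rw [ncard_singleton, hIcard]) (finite_singleton e)] at hI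

lemma rk_insert_pair_le_one [M.Finite] (h : ¬ M.Indep (insert e {f})) :
    rk M (insert e {f}) ≤ 1 := by
  by_contra h2
  push_neg at h2
  obtain ⟨I, hI, hIef, hIcard⟩ := exists_rk M (insert e {f})
  have hle : (insert e ({f} : Set α)).ncard ≤ I.ncard := by
    have := ncard_insert_le e ({f} : Set α)
    rw [ncard_singleton] at this
    omega
  rw [eq_of_subset_of_ncard_le hIef hle ((finite_singleton f).insert e)] at hI
  exact h hI

lemma cocircuit_compl_rk [M.Finite] (hCC : Cocircuit M Q) (hQE : Q ⊆ M.E) (hp : p ∈ Q) :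
    rk M (M.E \ Q) + 1 = rk M M.E ∧ rk M (insert p (M.E \ Q)) = rk M M.E := by
  haveI := dualFinite M
  have hQfin : Q.Finite := M.ground_finite.subset hQE
  have h1 : rk M✶ Q + 1 = Q.ncard := circuit_rk hCC
  have h2 : rk M✶ Q + rk M M.E = Q.ncard + rk M (M.E \ Q) := rk_dual hQE
  have h3 : rk M✶ (Q \ {p}) = (Q \ {p}).ncard := by
    refine le_antisymm (rk_le_ncard (hQfin.diff)) (le_rk (hCC.2.2 p hp) Subset.rfl)
  have h4 : rk M✶ (Q \ {p}) + rk M M.E = (Q \ {p}).ncard + rk M (M.E \ (Q \ {p})) :=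
    rk_dual (diff_subset.trans hQE)
  have h5 : M.E \ (Q \ {p}) = insert p (M.E \ Q) := by
    ext x
    simp only [mem_diff, mem_singleton_iff, mem_insert_iff, not_and, not_not]
    constructor
    · rintro ⟨hxE, hx⟩
      by_cases hxQ : x ∈ Q
      · exact Or.inl (hx hxQ)
      · exact Or.inr ⟨hxE, hxQ⟩
    · rintro (rfl | ⟨hxE, hxQ⟩)
      · exact ⟨hQE hp, fun _ => rfl⟩
      · exact ⟨hxE, fun h => absurd h hxQ⟩
  rw [h5] at h4
  have h6 : (Q \ {p}).ncard + 1 = Q.ncard := by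
    rw [ncard_diff_singleton_of_mem hp]
    have : 1 ≤ Q.ncard := (ncard_pos hQfin).2 ⟨p, hp⟩
    omega
  constructor <;> omega

lemma core [M.Finite] (hM : ThreeConnected M)
    (hQE : Q ⊆ M.E) (hC : Circuit M Q) (hCC : Cocircuit M Q)
    (hQc : c ∈ Q) (hpc : p ≠ c) (hpE : p ∈ M.E) (hAE : A ⊆ M.E) (hBE : B ⊆ M.E)
    (hcB : c ∈ B) (hQA : Q \ {c} ⊆ insert p A)
    (hpA : rk M (insert p A) = rk M A)
    (hEpA : M.E \ insert p A = B)
    (hED : M.E \ (B \ {c}) = insert c (insert p A))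
    (hrA : 3 ≤ rk M A) (hrB : 3 ≤ rk M B)
    (hsum : rk M A + rk M B ≤ rk M M.E + 2) : False := by
  haveI := dualFinite M
  have hEfin : M.E.Finite := M.ground_finite
  have hcE : c ∈ M.E := hQE hQc
  have hZ2 : insert p A ⊆ M.E := insert_subset hpE hAE
  have hZ1 : insert c (insert p A) ⊆ M.E := insert_subset hcE hZ2
  have hcZ2 : c ∉ insert p A := by
    have : c ∈ M.E \ insert p A := hEpA ▸ hcB
    exact this.2
  -- rank in M : c is spanned by A ∪ {p}
  have s1 : rk M (insert c (insert p A)) = rk M A := by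
    rw [← hpA]
    exact spans_insert_mono hQA (circuit_spans_insert hC hQc)
  -- rank in the dual : c is co-spanned by A ∪ {p}
  have s2 : rk M✶ (insert c (insert p A)) = rk M✶ (insert p A) :=
    spans_insert_mono hQA (circuit_spans_insert hCC hQc)
  -- translate s2 through duality
  have d2 : rk M✶ (insert p A) + rk M M.E = (insert p A).ncard + rk M B := by
    have := rk_dual hZ2
    rwa [hEpA] at this
  have hEZ1 : M.E \ insert c (insert p A) = B \ {c} := by
    rw [← hED, diff_diff_cancel_left (diff_subset.trans hBE)]
  have d1 : rk M✶ (insert c (insert p A)) + rk M M.E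
      = (insert p A).ncard + 1 + rk M (B \ {c}) := by
    have := rk_dual hZ1
    rwa [hEZ1, ncard_insert_of_notMem hcZ2 (hEfin.subset hZ2)] at this
  have hBc : rk M (B \ {c}) + 1 = rk M B := by omega
  -- final contradiction with 3-connectivity
  have hsz1 : 2 ≤ (B \ {c}).ncard := by
    have := rk_le_ncard (M := M) ((hEfin.subset hBE).diff (t := {c}))
    omega
  have hsz2 : 2 ≤ (M.E \ (B \ {c})).ncard := by
    rw [hED]
    have h1 : A ⊆ insert c (insert p A) := (subset_insert p A).trans (subset_insert c _)
    have h2 := ncard_le_ncard h1 (hEfin.subset hZ1)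
    have h3 := rk_le_ncard (M := M) (hEfin.subset hAE)
    omega
  have hfin := threeConn_rk_ge hM (by omega : 2 < 3) (diff_subset.trans hBE) hsz1 hsz2
  rw [hED, s1] at hfin
  omega


theorem master (M : Matroid α) [M.Finite] (hM : ThreeConnected M) {Q : Set α} {p : α}
    (hQE : Q ⊆ M.E) (hQ4 : Q.ncard = 4) (hC : Circuit M Q) (hCC : Cocircuit M Q)
    (hE : 8 ≤ M.E.ncard) (hp : p ∈ Q) :
    SiThreeConnected (contract M {p}) := by
  classical
  intro N hN
  set M' := contract M {p} with hM'def
  haveI : M'.Finite := contractFinite M p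
  obtain ⟨X, hXE, hNdef, hX1, hX2, hX3⟩ := hN
  have hM'E : M'.E = M.E \ {p} := contract_ground M p
  rw [hM'E] at hXE
  have hpE : p ∈ M.E := hQE hp
  have hEfin : M.E.Finite := M.ground_finite
  have hXfin : X.Finite := hEfin.subset (hXE.trans diff_subset)
  haveI : N.Finite := ⟨by rw [hNdef, restrict_ground_eq]; exact hXfin⟩
  have hNE : N.E = X := by rw [hNdef, restrict_ground_eq]
  have hrkp : rk M {p} = 1 := (threeConn_singleton hM (by omega) hpE).1
  have hcr : ∀ Z : Set α, Z ⊆ M.E \ {p} → rk M' Z + 1 = rk M (insert p Z) := by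
    intro Z hZ
    have := rk_contract_add (M := M) hpE hZ
    rwa [hrkp] at this
  have hloop : ∀ e ∈ M.E \ {p}, rk M' {e} = 1 := by
    intro e he
    have h1 := hcr {e} (singleton_subset_iff.2 he)
    have h2 : rk M (insert p {e}) = 2 :=
      threeConn_pair hM (by omega) hpE he.1 (fun h => he.2 (mem_singleton_iff.2 h.symm))
    omega
  intro k hk S hsep
  obtain ⟨hSE, hlam, hkS, hkT⟩ := hsep
  rw [hNE] at hSE hkT
  have hSX : S ⊆ X := hSE
  set A : Set α := {x | ∃ f ∈ S, x ∈ M'.closure {f}} with hAdef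
  have hAE' : A ⊆ M.E \ {p} := by
    rintro x ⟨f, hf, hx⟩
    rw [← hM'E]
    exact M'.closure_subset_ground {f} hx
  have hpA : p ∉ A := fun h => (hAE' h).2 rfl
  set B : Set α := M.E \ insert p A with hBdef
  have hBE' : B ⊆ M.E \ {p} := by
    rintro x ⟨hxE, hx⟩
    exact ⟨hxE, fun h => hx (by rw [mem_singleton_iff.1 h]; exact mem_insert p A)⟩
  have hpB : p ∉ B := fun h => h.2 (mem_insert p A)
  have hABdisj : ∀ x, x ∈ A → x ∉ B := fun x hx hxB => hxB.2 (mem_insert_iff.2 (Or.inr hx))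
  have hAsub : A ⊆ M.E := hAE'.trans diff_subset
  have hBsub : B ⊆ M.E := hBE'.trans diff_subset
  have hU : M.E \ {p} = A ∪ B := by
    ext x
    constructor
    · intro hx
      by_cases hxA : x ∈ A
      · exact Or.inl hxA
      · refine Or.inr ⟨hx.1, fun h => ?_⟩
        rcases mem_insert_iff.1 h with h' | h'
        · exact hx.2 (mem_singleton_iff.2 h')
        · exact hxA h'
    · rintro (hx | hx)
      · exact hAE' hx
      · exact hBE' hx
  have hSA : S ⊆ A := fun s hs => ⟨s, hs, M'.subset_closure {s}
      (by rw [hM'E]; exact singleton_subset_iff.2 (hXE (hSX hs))) rfl⟩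
  -- parallel elements give spanning
  have hparallel : ∀ x ∈ M.E \ {p}, ∀ f ∈ X, x ∈ M'.closure {f} → ∀ T : Set α, f ∈ T →
      rk M' (insert x T) = rk M' T := by
    intro x hx f hfX hcl T hfT
    have hIf : M'.Indep {f} := hX1 f hfX
    rcases (hIf.mem_closure_iff).1 hcl with hdep | hxf
    · have h1 : rk M' (insert x {f}) ≤ 1 := rk_insert_pair_le_one hdep.not_indep
      have h2 : rk M' {f} = 1 := hloop f (hXE hfX)
      have h3 := rk_mono (M := M') (subset_insert x ({f} : Set α))
      exact spans_insert_mono (singleton_subset_iff.2 hfT) (by omega)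
    · rw [mem_singleton_iff] at hxf
      rw [hxf, insert_eq_of_mem hfT]
  have hrkA : rk M' A = rk M' S := by
    have h := rk_union_eq_self_of_spans (M := M') (X := S) (Y := A) ?_
    · rwa [union_eq_self_of_subset_left hSA] at h
    · rintro x ⟨f, hfS, hcl⟩
      exact hparallel x (hAE' ⟨f, hfS, hcl⟩) f (hSX hfS) hcl S hfS
  have hXSB : X \ S ⊆ B := by
    rintro x ⟨hxX, hxS⟩
    refine ⟨(hXE hxX).1, fun h => ?_⟩
    rcases mem_insert_iff.1 h with h' | hxA
    · exact (hXE hxX).2 (mem_singleton_iff.2 h')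
    · obtain ⟨f, hfS, hcl⟩ := hxA
      exact hxS (by rw [hX2 x f hxX (hSX hfS) hcl]; exact hfS)
  have hrkB : rk M' B = rk M' (X \ S) := by
    have h := rk_union_eq_self_of_spans (M := M') (X := X \ S) (Y := B) ?_
    · rwa [union_eq_self_of_subset_left hXSB] at h
    · intro x hx
      have hxE' : x ∈ M.E \ {p} := hBE' hx
      have hind : M'.Indep {x} := rk_singleton_indep (hloop x hxE')
      obtain ⟨f, hfX, hcl⟩ := hX3 x (by rw [hM'E]; exact hxE') hind
      have hfS : f ∉ S := fun hfS => hABdisj x ⟨f, hfS, hcl⟩ hx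
      exact hparallel x hxE' f hfX hcl (X \ S) ⟨hfX, hfS⟩
  have hrkX : rk M' (M.E \ {p}) = rk M' X := by
    have h := rk_union_eq_self_of_spans (M := M') (X := X) (Y := M.E \ {p}) ?_
    · rwa [union_eq_self_of_subset_left hXE] at h
    · intro x hx
      have hind : M'.Indep {x} := rk_singleton_indep (hloop x hx)
      obtain ⟨f, hfX, hcl⟩ := hX3 x (by rw [hM'E]; exact hx) hind
      exact hparallel x hx f hfX hcl X hfX
  -- lambda of N in terms of M'
  have hrkNS : rk N S = rk M' S := by rw [hNdef]; exact rk_restrict hSX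
  have hrkNT : rk N (X \ S) = rk M' (X \ S) := by
    rw [hNdef]; exact rk_restrict diff_subset
  have hrkNX : rk N X = rk M' X := by rw [hNdef]; exact rk_restrict Subset.rfl
  have hlam' : rk M' S + rk M' (X \ S) + 1 ≤ rk M' X + k := by
    have h0 : lambda N S = (rk N S : ℤ) + (rk N (N.E \ S) : ℤ) - (rk N N.E : ℤ) := rfl
    rw [h0, hNE, hrkNS, hrkNT, hrkNX] at hlam
    omega
  have hArk := hcr A hAE'
  have hBrk := hcr B hBE'
  have hErk : rk M' (M.E \ {p}) + 1 = rk M M.E := by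
    have := hcr (M.E \ {p}) Subset.rfl
    rwa [insert_diff_singleton, insert_eq_of_mem hpE] at this
  have hsum : rk M (insert p A) + rk M (insert p B) ≤ rk M M.E + k := by omega
  have hEpA : M.E \ insert p A = B := hBdef.symm
  have hEA : M.E \ A = insert p B := by
    ext x
    constructor
    · rintro ⟨hxE, hxA⟩
      by_cases hxp : x = p
      · exact mem_insert_iff.2 (Or.inl hxp)
      · exact mem_insert_iff.2 (Or.inr ⟨hxE, fun h => (mem_insert_iff.1 h).elim hxp hxA⟩)
    · intro h
      rcases mem_insert_iff.1 h with rfl | hxB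
      · exact ⟨hpE, hpA⟩
      · exact ⟨hBsub hxB, fun h' => hABdisj x h' hxB⟩
  have hEpB : M.E \ insert p B = A := by
    ext x
    constructor
    · rintro ⟨hxE, hx⟩
      have hxp : x ≠ p := fun h => hx (by rw [h]; exact mem_insert p B)
      have hxB : x ∉ B := fun h => hx (mem_insert_iff.2 (Or.inr h))
      by_contra hxA
      exact hxB ⟨hxE, fun h2 => (mem_insert_iff.1 h2).elim hxp hxA⟩
    · intro hxA
      refine ⟨hAsub hxA, fun h => ?_⟩
      rcases mem_insert_iff.1 h with rfl | hxB
      · exact hpA hxA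
      · exact hABdisj x hxA hxB
  have hApB : insert p A ⊆ M.E := insert_subset hpE hAsub
  have hBpB : insert p B ⊆ M.E := insert_subset hpE hBsub
  interval_cases k
  -- k = 0
  · have h1 : rk M' X ≤ rk M' S + rk M' (X \ S) := by
      have := rk_union_le (M := M') S (X \ S)
      rwa [union_diff_cancel hSX] at this
    omega
  -- k = 1
  · obtain ⟨s, hs⟩ : S.Nonempty := (ncard_pos (hXfin.subset hSX)).1 (by omega)
    obtain ⟨t, ht⟩ : (X \ S).Nonempty := (ncard_pos (hXfin.diff)).1 (by omega)
    have hsB : s ∈ A := hSA hs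
    have htB : t ∈ B := hXSB ht
    have ha2 : 2 ≤ rk M (insert p A) := by
      have h1 : rk M' {s} = 1 := hloop s (hXE (hSX hs))
      have h2 : rk M' {s} ≤ rk M' A := rk_mono (singleton_subset_iff.2 hsB)
      omega
    have hb2 : 2 ≤ rk M (insert p B) := by
      have h1 : rk M' {t} = 1 := hloop t (hXE ht.1)
      have h2 : rk M' {t} ≤ rk M' B := rk_mono (singleton_subset_iff.2 htB)
      omega
    by_cases hclA : rk M (insert p A) = rk M A
    · by_cases hclB : rk M (insert p B) = rk M B
      · -- 2-separation (A, insert p B)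
        have hsz1 : 2 ≤ A.ncard := by
          have := rk_le_ncard (M := M) (hEfin.subset hAsub)
          omega
        have hsz2 : 2 ≤ (M.E \ A).ncard := by
          rw [hEA]
          have h1 := ncard_le_ncard (subset_insert p B) (hEfin.subset hBpB)
          have h2 := rk_le_ncard (M := M) (hEfin.subset hBsub)
          omega
        have h3 := threeConn_rk_ge hM (by omega : 2 < 3) hAsub hsz1 hsz2
        rw [hEA] at h3
        omega
      · -- p not in closure of B : 1-separation (insert p A, B)
        have hB1 : rk M B + 1 = rk M (insert p B) := by
          have h1 := rk_insert_le (M := M) (e := p) (X := B)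
          have h2 := rk_mono (M := M) (subset_insert p B)
          omega
        have hsz1 : 1 ≤ (insert p A).ncard := by
          rw [ncard_insert_of_notMem hpA (hEfin.subset hAsub)]
          omega
        have hsz2 : 1 ≤ (M.E \ insert p A).ncard := by
          rw [hEpA]
          exact (ncard_pos (hEfin.subset hBsub)).2 ⟨t, htB⟩
        have h3 := threeConn_rk_ge hM (by omega : 1 < 3) hApB hsz1 hsz2
        rw [hEpA] at h3
        omega
    · -- p not in closure of A : 1-separation (insert p B, A)
      have hA1 : rk M A + 1 = rk M (insert p A) := by
        have h1 := rk_insert_le (M := M) (e := p) (X := A)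
        have h2 := rk_mono (M := M) (subset_insert p A)
        omega
      have hsz1 : 1 ≤ (insert p B).ncard := by
        rw [ncard_insert_of_notMem hpB (hEfin.subset hBsub)]
        omega
      have hsz2 : 1 ≤ (M.E \ insert p B).ncard := by
        rw [hEpB]
        exact (ncard_pos (hEfin.subset hAsub)).2 ⟨s, hsB⟩
      have h3 := threeConn_rk_ge hM (by omega : 1 < 3) hBpB hsz1 hsz2
      rw [hEpB] at h3
      omega
  -- k = 2
  · obtain ⟨s₁, s₂, hs₁, hs₂, hs12⟩ := (one_lt_ncard_iff (hXfin.subset hSX)).1 (by omega)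
    obtain ⟨t₁, t₂, ht₁, ht₂, ht12⟩ := (one_lt_ncard_iff (s := X \ S) (hXfin.diff (t := S))).1 (by omega)
    have hrkS2 : 2 ≤ rk M' S := by
      rcases em (M'.Indep (insert s₁ {s₂})) with hind | hind
      · have h := le_rk (M := M') hind
          (insert_subset hs₁ (singleton_subset_iff.2 hs₂))
        rwa [ncard_pair hs12] at h
      · exfalso
        have hI2 : M'.Indep {s₂} := hX1 s₂ (hSX hs₂)
        have hcl : s₁ ∈ M'.closure {s₂} := (hI2.mem_closure_iff).2 (Or.inl (dep_iff.2
          ⟨hind, insert_subset (by rw [hM'E]; exact hXE (hSX hs₁))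
            (singleton_subset_iff.2 (by rw [hM'E]; exact hXE (hSX hs₂)))⟩))
        exact hs12 (hX2 s₁ s₂ (hSX hs₁) (hSX hs₂) hcl)
    have hrkT2 : 2 ≤ rk M' (X \ S) := by
      rcases em (M'.Indep (insert t₁ {t₂})) with hind | hind
      · have h := le_rk (M := M') hind
          (insert_subset ht₁ (singleton_subset_iff.2 ht₂))
        rwa [ncard_pair ht12] at h
      · exfalso
        have hI2 : M'.Indep {t₂} := hX1 t₂ ht₂.1
        have hcl : t₁ ∈ M'.closure {t₂} := (hI2.mem_closure_iff).2 (Or.inl (dep_iff.2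
          ⟨hind, insert_subset (by rw [hM'E]; exact hXE ht₁.1)
            (singleton_subset_iff.2 (by rw [hM'E]; exact hXE ht₂.1))⟩))
        exact ht12 (hX2 t₁ t₂ ht₁.1 ht₂.1 hcl)
    have ha3 : 3 ≤ rk M (insert p A) := by omega
    have hb3 : 3 ≤ rk M (insert p B) := by omega
    by_cases hclA : rk M (insert p A) = rk M A
    · by_cases hclB : rk M (insert p B) = rk M B
      · -- the quad argument
        have hQAne : (Q ∩ A).Nonempty := by
          by_contra h
          rw [not_nonempty_iff_eq_empty] at h
          have hsubEQ : A ⊆ M.E \ Q := fun x hx =>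
            ⟨hAsub hx, fun hq => (eq_empty_iff_forall_notMem.1 h x) ⟨hq, hx⟩⟩
          have h1 := cocircuit_compl_rk hCC hQE hp
          have h2 : rk M (insert p (M.E \ Q)) = rk M (M.E \ Q) :=
            spans_insert_mono hsubEQ hclA
          omega
        have hQBne : (Q ∩ B).Nonempty := by
          by_contra h
          rw [not_nonempty_iff_eq_empty] at h
          have hsubEQ : B ⊆ M.E \ Q := fun x hx =>
            ⟨hBsub hx, fun hq => (eq_empty_iff_forall_notMem.1 h x) ⟨hq, hx⟩⟩
          have h1 := cocircuit_compl_rk hCC hQE hp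
          have h2 : rk M (insert p (M.E \ Q)) = rk M (M.E \ Q) :=
            spans_insert_mono hsubEQ hclB
          omega
        have hQpfin : (Q \ {p}).Finite := (hEfin.subset hQE).diff
        have hQp3 : (Q \ {p}).ncard = 3 := by
          rw [ncard_diff_singleton_of_mem hp, hQ4]
        have hQsplit : (Q \ {p}) ∩ A ∪ (Q \ {p}) ∩ B = Q \ {p} := by
          rw [← inter_union_distrib_left]
          refine inter_eq_self_of_subset_left ?_
          rw [← hU]
          exact fun x hx => ⟨hQE hx.1, hx.2⟩
        have hdisj2 : Disjoint ((Q \ {p}) ∩ A) ((Q \ {p}) ∩ B) := by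
          rw [disjoint_left]
          rintro x ⟨-, hxA⟩ ⟨-, hxB⟩
          exact hABdisj x hxA hxB
        have hcard3 : ((Q \ {p}) ∩ A).ncard + ((Q \ {p}) ∩ B).ncard = 3 := by
          rw [← ncard_union_eq hdisj2 (hQpfin.subset inter_subset_left)
            (hQpfin.subset inter_subset_left), hQsplit, hQp3]
        have h1A : 1 ≤ ((Q \ {p}) ∩ A).ncard := by
          refine (ncard_pos (hQpfin.subset inter_subset_left)).2 ?_
          obtain ⟨x, hxQ, hxA⟩ := hQAne
          exact ⟨x, ⟨hxQ, fun h => hpA (by rw [← mem_singleton_iff.1 h]; exact hxA)⟩, hxA⟩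
        have h1B : 1 ≤ ((Q \ {p}) ∩ B).ncard := by
          refine (ncard_pos (hQpfin.subset inter_subset_left)).2 ?_
          obtain ⟨x, hxQ, hxB⟩ := hQBne
          exact ⟨x, ⟨hxQ, fun h => hpB (by rw [← mem_singleton_iff.1 h]; exact hxB)⟩, hxB⟩
        rcases (show ((Q \ {p}) ∩ A).ncard = 1 ∨ ((Q \ {p}) ∩ B).ncard = 1 by omega)
          with h | h
        · -- singleton on the A side : apply core with roles swapped
          obtain ⟨c, hc⟩ := ncard_eq_one.1 h
          have hcmem : c ∈ (Q \ {p}) ∩ A := by rw [hc]; exact mem_singleton c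
          have hcQ : c ∈ Q := hcmem.1.1
          have hcp : p ≠ c := fun h' => hcmem.1.2 (mem_singleton_iff.2 h'.symm)
          have hcA : c ∈ A := hcmem.2
          have hQc' : Q \ {c} ⊆ insert p B := by
            rintro x ⟨hxQ, hxc⟩
            by_cases hxp : x = p
            · rw [hxp]; exact mem_insert p B
            · have hx : x ∈ (Q \ {p}) ∩ A ∪ (Q \ {p}) ∩ B := by
                rw [hQsplit]
                exact ⟨hxQ, fun hh => hxp (mem_singleton_iff.1 hh)⟩
              rcases hx with hx | hx
              · rw [hc] at hx
                exact absurd hx hxc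
              · exact mem_insert_iff.2 (Or.inr hx.2)
          have hEDA : M.E \ (A \ {c}) = insert c (insert p B) := by
            ext x
            constructor
            · rintro ⟨hxE, hx⟩
              by_cases hxc : x = c
              · exact mem_insert_iff.2 (Or.inl hxc)
              · refine mem_insert_iff.2 (Or.inr ?_)
                by_cases hxp : x = p
                · exact mem_insert_iff.2 (Or.inl hxp)
                · refine mem_insert_iff.2 (Or.inr ⟨hxE, fun h' => ?_⟩)
                  rcases mem_insert_iff.1 h' with h'' | h''
                  · exact hxp h''
                  · exact hx ⟨h'', fun hh => hxc (mem_singleton_iff.1 hh)⟩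
            · intro h'
              rcases mem_insert_iff.1 h' with rfl | h''
              · exact ⟨hQE hcQ, fun hh => hh.2 rfl⟩
              · rcases mem_insert_iff.1 h'' with rfl | hxB
                · exact ⟨hpE, fun hh => hpA hh.1⟩
                · exact ⟨hBsub hxB, fun hh => hABdisj x hh.1 hxB⟩
          exact core hM hQE hC hCC hcQ hcp hpE hBsub hAsub hcA hQc' hclB hEpB hEDA
            (by omega) (by omega) (by omega)
        · -- singleton on the B side : apply core directly
          obtain ⟨c, hc⟩ := ncard_eq_one.1 h
          have hcmem : c ∈ (Q \ {p}) ∩ B := by rw [hc]; exact mem_singleton c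
          have hcQ : c ∈ Q := hcmem.1.1
          have hcp : p ≠ c := fun h' => hcmem.1.2 (mem_singleton_iff.2 h'.symm)
          have hcB : c ∈ B := hcmem.2
          have hQc' : Q \ {c} ⊆ insert p A := by
            rintro x ⟨hxQ, hxc⟩
            by_cases hxp : x = p
            · rw [hxp]; exact mem_insert p A
            · have hx : x ∈ (Q \ {p}) ∩ A ∪ (Q \ {p}) ∩ B := by
                rw [hQsplit]
                exact ⟨hxQ, fun hh => hxp (mem_singleton_iff.1 hh)⟩
              rcases hx with hx | hx
              · exact mem_insert_iff.2 (Or.inr hx.2)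
              · rw [hc] at hx
                exact absurd hx hxc
          have hEDB : M.E \ (B \ {c}) = insert c (insert p A) := by
            ext x
            constructor
            · rintro ⟨hxE, hx⟩
              by_cases hxc : x = c
              · exact mem_insert_iff.2 (Or.inl hxc)
              · refine mem_insert_iff.2 (Or.inr ?_)
                by_cases hxp : x = p
                · exact mem_insert_iff.2 (Or.inl hxp)
                · refine mem_insert_iff.2 (Or.inr ?_)
                  have hxB : x ∉ B := fun hh => hx ⟨hh, fun hh2 => hxc (mem_singleton_iff.1 hh2)⟩
                  have hxU : x ∈ A ∪ B := by
                    rw [← hU]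
                    exact ⟨hxE, fun hh => hxp (mem_singleton_iff.1 hh)⟩
                  exact hxU.elim id (fun hh => absurd hh hxB)
            · intro h'
              rcases mem_insert_iff.1 h' with rfl | h''
              · exact ⟨hQE hcQ, fun hh => hh.2 rfl⟩
              · rcases mem_insert_iff.1 h'' with rfl | hxA
                · exact ⟨hpE, fun hh => hpB hh.1⟩
                · exact ⟨hAsub hxA, fun hh => hABdisj x hxA hh.1⟩
          exact core hM hQE hC hCC hcQ hcp hpE hAsub hBsub hcB hQc' hclA hEpA hEDB
            (by omega) (by omega) (by omega)
      · -- p not spanned by B : 2-separation (insert p A, B)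
        have hB1 : rk M B + 1 = rk M (insert p B) := by
          have h1 := rk_insert_le (M := M) (e := p) (X := B)
          have h2 := rk_mono (M := M) (subset_insert p B)
          omega
        have hsz1 : 2 ≤ (insert p A).ncard := by
          have h1 : ({s₁, s₂} : Set α) ⊆ insert p A :=
            (insert_subset (hSA hs₁) (singleton_subset_iff.2 (hSA hs₂))).trans
              (subset_insert p A)
          have h2 := ncard_le_ncard h1 (hEfin.subset hApB)
          rw [ncard_pair hs12] at h2
          omega
        have hsz2 : 2 ≤ (M.E \ insert p A).ncard := by
          rw [hEpA]
          have h2 := rk_le_ncard (M := M) (hEfin.subset hBsub)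
          omega
        have h3 := threeConn_rk_ge hM (by omega : 2 < 3) hApB hsz1 hsz2
        rw [hEpA] at h3
        omega
    · -- p not spanned by A : 2-separation (insert p B, A)
      have hA1 : rk M A + 1 = rk M (insert p A) := by
        have h1 := rk_insert_le (M := M) (e := p) (X := A)
        have h2 := rk_mono (M := M) (subset_insert p A)
        omega
      have hsz1 : 2 ≤ (insert p B).ncard := by
        have h1 : ({t₁, t₂} : Set α) ⊆ insert p B :=
          (insert_subset (hXSB ht₁) (singleton_subset_iff.2 (hXSB ht₂))).trans
            (subset_insert p B)
        have h2 := ncard_le_ncard h1 (hEfin.subset hBpB)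
        rw [ncard_pair ht12] at h2
        omega
      have hsz2 : 2 ≤ (M.E \ insert p B).ncard := by
        rw [hEpB]
        have h2 := rk_le_ncard (M := M) (hEfin.subset hAsub)
        omega
      have h3 := threeConn_rk_ge hM (by omega : 2 < 3) hBpB hsz1 hsz2
      rw [hEpB] at h3
      omega


lemma lambda_dual [M.Finite] (hS : S ⊆ M.E) : lambda M✶ S = lambda M S := by
  haveI := dualFinite M
  have hEfin : M.E.Finite := M.ground_finite
  have h1 := rk_dual (M := M) hS
  have h2 : rk M✶ (M.E \ S) + rk M M.E = (M.E \ S).ncard + rk M S := by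
    have := rk_dual (M := M) (diff_subset (s := M.E) (t := S))
    rwa [diff_diff_cancel_left hS] at this
  have h3 : rk M✶ M.E + rk M M.E = M.E.ncard := by
    have := rk_dual (M := M) (Subset.rfl : M.E ⊆ M.E)
    rwa [diff_self, rk_empty, add_zero] at this
  have h4 : S.ncard + (M.E \ S).ncard = M.E.ncard := by
    rw [ncard_diff hS (hEfin.subset hS)]
    have := ncard_le_ncard hS hEfin
    omega
  show (rk M✶ S : ℤ) + (rk M✶ (M✶.E \ S) : ℤ) - (rk M✶ M✶.E : ℤ)
      = (rk M S : ℤ) + (rk M (M.E \ S) : ℤ) - (rk M M.E : ℤ)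
  rw [dual_ground]
  omega

lemma threeConn_dual [M.Finite] (h : ThreeConnected M) : ThreeConnected M✶ := by
  intro k hk S hsep
  obtain ⟨hSE, hl, h1, h2⟩ := hsep
  rw [dual_ground] at hSE h2
  rw [lambda_dual hSE] at hl
  exact h k hk S ⟨hSE, hl, h1, h2⟩


end NDP

/-- For a spider-like 3-separator `P = Q₁ ∪ Q₂` of a 3-connected matroid,
`si(M/p)` and `co(M\p)` are 3-connected for every `p ∈ P`. -/
theorem statement_18 {α : Type*} (M : Matroid α) [M.Finite] (hM : NDP.ThreeConnected M)
    (p₁ p₂ p₃ p₄ q₁ q₂ q₃ q₄ : α) (Q₁ Q₂ P : Set α)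
    (hQ1 : Q₁ = {p₁, p₂, p₃, p₄}) (hQ2 : Q₂ = {q₁, q₂, q₃, q₄}) (hP : P = Q₁ ∪ Q₂)
    (hcard : P.ncard = 8) (hPE : P ⊆ M.E) (hdisj : Disjoint Q₁ Q₂)
    (hquad1 : NDP.Circuit M Q₁ ∧ NDP.Cocircuit M Q₁)
    (hquad2 : NDP.Circuit M Q₂ ∧ NDP.Cocircuit M Q₂)
    (hr : NDP.rk M P = 5) (hrstar : NDP.rk M✶ P = 5) (hl : NDP.lambda M P = 2)
    (hcirc : ∀ C ⊆ P, C ≠ Q₁ → C ≠ Q₂ → (NDP.Circuit M C ↔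
      C = {p₁, p₂, q₁, q₂} ∨ C = {p₁, p₂, q₃, q₄} ∨
      C = {p₃, p₄, q₁, q₂} ∨ C = {p₃, p₄, q₃, q₄}))
    (hcocirc : ∀ C ⊆ P, C ≠ Q₁ → C ≠ Q₂ → (NDP.Cocircuit M C ↔
      C = {p₁, p₃, q₁, q₃} ∨ C = {p₁, p₃, q₂, q₄} ∨
      C = {p₂, p₄, q₁, q₃} ∨ C = {p₂, p₄, q₂, q₄})) :
    ∀ p ∈ P, NDP.SiThreeConnected (NDP.contract M {p}) ∧
      NDP.CoThreeConnected (NDP.delete M {p}) := by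
  classical
  haveI := NDP.dualFinite M
  have hE8 : 8 ≤ M.E.ncard := by
    have := Set.ncard_le_ncard hPE M.ground_finite
    omega
  have hQ1sub : Q₁ ⊆ M.E := (hP ▸ subset_union_left).trans hPE
  have hQ2sub : Q₂ ⊆ M.E := (hP ▸ subset_union_right).trans hPE
  have hQ1le : Q₁.ncard ≤ 4 := by
    rw [hQ1]
    calc ({p₁, p₂, p₃, p₄} : Set α).ncard ≤ ({p₂, p₃, p₄} : Set α).ncard + 1 :=
          Set.ncard_insert_le _ _
      _ ≤ ({p₃, p₄} : Set α).ncard + 1 + 1 := by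
          have := Set.ncard_insert_le p₂ ({p₃, p₄} : Set α)
          omega
      _ ≤ ({p₄} : Set α).ncard + 1 + 1 + 1 := by
          have := Set.ncard_insert_le p₃ ({p₄} : Set α)
          omega
      _ ≤ 4 := by rw [Set.ncard_singleton]
  have hQ2le : Q₂.ncard ≤ 4 := by
    rw [hQ2]
    calc ({q₁, q₂, q₃, q₄} : Set α).ncard ≤ ({q₂, q₃, q₄} : Set α).ncard + 1 :=
          Set.ncard_insert_le _ _
      _ ≤ ({q₃, q₄} : Set α).ncard + 1 + 1 := by
          have := Set.ncard_insert_le q₂ ({q₃, q₄} : Set α)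
          omega
      _ ≤ ({q₄} : Set α).ncard + 1 + 1 + 1 := by
          have := Set.ncard_insert_le q₃ ({q₄} : Set α)
          omega
      _ ≤ 4 := by rw [Set.ncard_singleton]
  have hsum8 : 8 ≤ Q₁.ncard + Q₂.ncard := by
    have h := Set.ncard_union_le Q₁ Q₂
    rw [← hP, hcard] at h
    omega
  have hQ1card : Q₁.ncard = 4 := by omega
  have hQ2card : Q₂.ncard = 4 := by omega
  intro p hp
  have key : ∀ Q : Set α, Q ⊆ M.E → Q.ncard = 4 → NDP.Circuit M Q → NDP.Cocircuit M Q →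
      p ∈ Q → NDP.SiThreeConnected (NDP.contract M {p}) ∧
        NDP.CoThreeConnected (NDP.delete M {p}) := by
    intro Q hQE hQ4 hc hcc hpQ
    refine ⟨NDP.master M hM hQE hQ4 hc hcc hE8 hpQ, ?_⟩
    have hdual : NDP.SiThreeConnected (NDP.contract M✶ {p}) := by
      refine NDP.master M✶ (NDP.threeConn_dual hM) ?_ hQ4 hcc ?_ ?_ hpQ
      · rwa [dual_ground]
      · show NDP.Circuit M✶✶ Q
        rw [dual_dual]
        exact hc
      · rwa [dual_ground]
    intro N hsim
    have heq : (NDP.delete M {p})✶ = NDP.contract M✶ {p} := by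
      show _ = (NDP.delete M✶✶ {p})✶
      rw [dual_dual]
    rw [heq] at hsim
    have h3 : NDP.ThreeConnected N := hdual N hsim
    haveI : N.Finite := by
      obtain ⟨X, hX, hNdef, -, -, -⟩ := hsim
      refine ⟨?_⟩
      rw [hNdef, restrict_ground_eq]
      rw [NDP.contract_ground, dual_ground] at hX
      exact M.ground_finite.subset (hX.trans diff_subset)
    exact NDP.threeConn_dual h3
  rw [hP] at hp
  rcases hp with hp | hp
  · exact key Q₁ hQ1sub hQ1card hquad1.1 hquad1.2 hp
  · exact key Q₂ hQ2sub hQ2card hquad2.1 hquad2.2 hp
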